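/- For every positive integer k, the spider graph S*_k satisfies Sb_k(S*_k) = 2k: some set of 2k edges has removal increasing the domination number by exactly k, and no set of fewer than 2k edges does. This shows the upper bound Sb_k(T) ≤ 2k for trees is sharp. -/

import Mathlib

/-- A finite set of vertices `D` is a dominating set of `G` if every vertex
is in `D` or adjacent to a vertex in `D`. -/
def SimpleGraph.IsDominatingSet {V : Type*} (G : SimpleGraph V) (D : Finset V) : Prop :=
  ∀ v : V, v ∈ D ∨ ∃ u ∈ D, G.Adj u v

/-- The domination number of `G`: the minimum cardinality of a dominating set. -/
noncomputable def SimpleGraph.domNum {V : Type*} (G : SimpleGraph V) : ℕ :=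
  sInf {n : ℕ | ∃ D : Finset V, G.IsDominatingSet D ∧ D.card = n}

/-- The `k`-synchronous bondage number of `G`: the minimum cardinality of a set of edges
whose deletion increases the domination number by exactly `k`.  (`Sb 1` is the classical
bondage number.) -/
noncomputable def SimpleGraph.synchBondage {V : Type*} (G : SimpleGraph V) (k : ℕ) : ℕ :=
  sInf {m : ℕ | ∃ E' : Finset (Sym2 V), ↑E' ⊆ G.edgeSet ∧
    (G.deleteEdges ↑E').domNum = G.domNum + k ∧ E'.card = m}

/-- The vertex type of the spider graph `S*_k`: a root, a pendant vertex `z` attached to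
the root, vertices `x i` attached to the root, and a leaf `y i` attached to each `x i`. -/
def SpiderV (k : ℕ) := Unit ⊕ Unit ⊕ Fin k ⊕ Fin k

instance (k : ℕ) : Fintype (SpiderV k) := by unfold SpiderV; infer_instance
instance (k : ℕ) : DecidableEq (SpiderV k) := by unfold SpiderV; infer_instance

/-- The base relation of the spider graph: the root (`inl ()`) is joined to `z`
(`inr (inl ())`) and to each `x i` (`inr (inr (inl i))`), and each `x i` is joined to the
leaf `y i` (`inr (inr (inr i))`). -/
def spiderRel (k : ℕ) : SpiderV k → SpiderV k → Prop
  | Sum.inl _, Sum.inr (Sum.inl _) => True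
  | Sum.inl _, Sum.inr (Sum.inr (Sum.inl _)) => True
  | Sum.inr (Sum.inr (Sum.inl i)), Sum.inr (Sum.inr (Sum.inr j)) => i = j
  | _, _ => False

/-- The spider graph `S*_k` on `2k + 2` vertices. -/
def spiderGraph (k : ℕ) : SimpleGraph (SpiderV k) :=
  SimpleGraph.fromRel (spiderRel k)

/-!
`S*_k` has domination number `k + 1`: the root and the `x i` dominate it, and since `z` and the
`y i` are leaves, every dominating set meets each of the `k + 1` disjoint pairs `{z, root}`,
`{y i, x i}`. Deleting the `2k` leg edges `root x i`, `x i y i` leaves the single edge `root z`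
on `2k + 2` vertices, so the domination number rises to `2k + 1`. Conversely, in a graph on `n`
vertices with two distinct edges one can drop a suitable endpoint of each edge from the vertex
set and still dominate, so the domination number is at most `n - 2`. Hence deleting `E'` raises
the domination number of `S*_k` by `k` only if at most one of its `2k + 1` edges survives,
i.e. `2k ≤ |E'|`.
-/

open Finset

namespace SimpleGraph

variable {V : Type*} {G : SimpleGraph V}

theorem domNum_le_card {D : Finset V} (hD : G.IsDominatingSet D) : G.domNum ≤ #D :=
  Nat.sInf_le ⟨D, hD, rfl⟩

theorem exists_isDominatingSet_card_eq_domNum [Fintype V] (G : SimpleGraph V) :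
    ∃ D : Finset V, G.IsDominatingSet D ∧ #D = G.domNum :=
  Nat.sInf_mem (s := {n | ∃ D : Finset V, G.IsDominatingSet D ∧ #D = n})
    ⟨_, univ, fun v => Or.inl (mem_univ v), rfl⟩

theorem IsDominatingSet.mem_or_mem_of_forall_adj_eq {D : Finset V} (hD : G.IsDominatingSet D)
    {u v : V} (huv : ∀ w, G.Adj w v → w = u) : v ∈ D ∨ u ∈ D :=
  (hD v).imp_right fun ⟨w, hw, hwv⟩ => huv w hwv ▸ hw

theorem synchBondage_eq {k m : ℕ} (E : Finset (Sym2 V)) (hE : ↑E ⊆ G.edgeSet)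
    (hdom : (G.deleteEdges ↑E).domNum = G.domNum + k) (hcard : #E = m)
    (hmin : ∀ E' : Finset (Sym2 V), ↑E' ⊆ G.edgeSet →
      (G.deleteEdges ↑E').domNum = G.domNum + k → m ≤ #E') :
    G.synchBondage k = m :=
  le_antisymm (Nat.sInf_le ⟨E, hE, hdom, hcard⟩)
    (le_csInf ⟨m, E, hE, hdom, hcard⟩ fun _ ⟨E', hE', hdom', hn⟩ =>
      hn ▸ hmin E' hE' hdom')

section Fintype

variable [Fintype V]

theorem isDominatingSet_compl [DecidableEq V] {S : Finset V}
    (hS : ∀ v ∈ S, ∃ u ∉ S, G.Adj u v) : G.IsDominatingSet Sᶜ := by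
  intro v
  by_cases hv : v ∈ S
  · obtain ⟨u, hu, huv⟩ := hS v hv
    exact Or.inr ⟨u, mem_compl.2 hu, huv⟩
  · exact Or.inl (mem_compl.2 hv)

theorem domNum_add_card_le_card {S : Finset V} (hS : ∀ v ∈ S, ∃ u ∉ S, G.Adj u v) :
    G.domNum + #S ≤ Fintype.card V := by
  classical
  have := domNum_le_card (isDominatingSet_compl hS)
  rw [card_compl] at this
  have := card_le_univ S
  omega

theorem domNum_add_one_le_card_of_adj {u v : V} (huv : G.Adj u v) :
    G.domNum + 1 ≤ Fintype.card V := by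
  have hS : ∀ w ∈ ({v} : Finset V), ∃ u ∉ ({v} : Finset V), G.Adj u w := by
    simpa using ⟨u, huv.ne, huv⟩
  simpa using domNum_add_card_le_card hS

theorem domNum_add_two_le_card_of_adj_of_adj {p q c d : V} (hpq : G.Adj p q)
    (hcd : G.Adj c d) (hcp : c ≠ p) (hcq : c ≠ q) (hdp : d ≠ p) :
    G.domNum + 2 ≤ Fintype.card V := by
  classical
  have hS : ∀ v ∈ ({p, c} : Finset V), ∃ u ∉ ({p, c} : Finset V), G.Adj u v := by
    simp only [mem_insert, mem_singleton, forall_eq_or_imp, forall_eq]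
    exact ⟨⟨q, by simp [hpq.ne.symm, hcq.symm], hpq.symm⟩,
      ⟨d, by simp [hdp, hcd.ne.symm], hcd.symm⟩⟩
  simpa [card_pair hcp.symm] using domNum_add_card_le_card hS

theorem domNum_add_two_le_card_of_nontrivial (h : G.edgeSet.Nontrivial) :
    G.domNum + 2 ≤ Fintype.card V := by
  obtain ⟨e₁, he₁, e₂, he₂, hne⟩ := h
  induction e₁ using Sym2.ind with | _ p q => ?_
  induction e₂ using Sym2.ind with | _ c d => ?_
  rw [mem_edgeSet] at he₁ he₂
  -- An endpoint of the second edge lies off the first one, as the two edges differ.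
  wlog hc : c ≠ p ∧ c ≠ q generalizing c d
  · refine this d c he₂.symm (fun h => hne (h.trans Sym2.eq_swap)) ?_
    have := he₂.ne
    rw [ne_eq, Sym2.eq_iff] at hne
    grind
  by_cases hdp : d = p
  · exact domNum_add_two_le_card_of_adj_of_adj he₁.symm he₂ hc.2 hc.1 (hdp ▸ he₁.ne)
  · exact domNum_add_two_le_card_of_adj_of_adj he₁ he₂ hc.1 hc.2 hdp

theorem card_le_domNum_add_one_of_subsingleton (h : G.edgeSet.Subsingleton) :
    Fintype.card V ≤ G.domNum + 1 := by
  classical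
  obtain ⟨D, hD, hcard⟩ := G.exists_isDominatingSet_card_eq_domNum
  have : #Dᶜ ≤ 1 := by
    refine card_le_one.2 fun a ha b hb => ?_
    rw [mem_compl] at ha hb
    obtain ⟨c, hc, hca⟩ := (hD a).resolve_left ha
    obtain ⟨d, hd, hdb⟩ := (hD b).resolve_left hb
    rcases Sym2.eq_iff.1 (h hca hdb) with ⟨-, hab⟩ | ⟨hcb, -⟩
    · exact hab
    · exact absurd (hcb ▸ hc) hb
  rw [card_compl] at this
  omega

theorem ncard_edgeSet_le_of_card_le_domNum_deleteEdges {E : Finset (Sym2 V)}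
    (h : Fintype.card V ≤ (G.deleteEdges ↑E).domNum + 1) : G.edgeSet.ncard ≤ #E + 1 := by
  have hsub : (G.deleteEdges ↑E).edgeSet.Subsingleton := Set.not_nontrivial_iff.1 fun hnt => by
    have := domNum_add_two_le_card_of_nontrivial hnt
    omega
  rw [edgeSet_deleteEdges] at hsub
  calc G.edgeSet.ncard ≤ (G.edgeSet \ ↑E).ncard + (↑E : Set (Sym2 V)).ncard :=
        Set.ncard_le_ncard_sdiff_add_ncard _ _
    _ ≤ #E + 1 := by
        rw [Set.ncard_coe_finset, add_comm]
        exact Nat.add_le_add_left (Set.ncard_le_one_iff_subsingleton.2 hsub) _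

end Fintype

end SimpleGraph

namespace SpiderV

variable {k : ℕ}

abbrev root : SpiderV k := Sum.inl ()
abbrev z : SpiderV k := Sum.inr (Sum.inl ())
abbrev x (i : Fin k) : SpiderV k := Sum.inr (Sum.inr (Sum.inl i))
abbrev y (i : Fin k) : SpiderV k := Sum.inr (Sum.inr (Sum.inr i))

@[elab_as_elim]
theorem ind {motive : SpiderV k → Prop} (root : motive root) (z : motive z)
    (x : ∀ i, motive (x i)) (y : ∀ i, motive (y i)) (v : SpiderV k) : motive v := by
  rcases v with ⟨⟩ | ⟨⟩ | i | i
  exacts [root, z, x i, y i]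

@[simp] theorem x_inj {i j : Fin k} : x i = x j ↔ i = j :=
  ⟨fun h => by cases h; rfl, congrArg x⟩

@[simp] theorem y_inj {i j : Fin k} : y i = y j ↔ i = j :=
  ⟨fun h => by cases h; rfl, congrArg y⟩

@[simp] theorem x_ne_z {i : Fin k} : x i ≠ z := nofun
@[simp] theorem y_ne_z {i : Fin k} : y i ≠ z := nofun
@[simp] theorem x_ne_y {i j : Fin k} : x i ≠ y j := nofun
@[simp] theorem y_ne_x {i j : Fin k} : y i ≠ x j := nofun

theorem card_eq : Fintype.card (SpiderV k) = 2 * k + 2 := by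
  simp only [SpiderV, Fintype.card_sum, Fintype.card_unit, Fintype.card_fin]
  ring

end SpiderV

namespace spiderGraph

open SimpleGraph SpiderV

variable {k : ℕ}

def legEdge : Fin k ⊕ Fin k → Sym2 (SpiderV k) :=
  Sum.elim (fun i => s(root, x i)) (fun i => s(x i, y i))

theorem legEdge_injective : Function.Injective (legEdge (k := k)) := by
  rintro (i | i) (j | j) h <;> simp_all [legEdge]

def legEdges (k : ℕ) : Finset (Sym2 (SpiderV k)) := univ.image legEdge

theorem card_legEdges : #(legEdges k) = 2 * k := by
  rw [legEdges, card_image_of_injective _ legEdge_injective, card_univ, Fintype.card_sum,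
    Fintype.card_fin, two_mul]

theorem root_z_notMem_legEdges : s(root, z) ∉ legEdges k := by
  simp [legEdges, legEdge]

theorem edgeSet_eq : (spiderGraph k).edgeSet = insert s(root, z) ↑(legEdges k) := by
  ext e
  induction e using Sym2.ind with | _ a b => ?_
  induction a using SpiderV.ind <;> induction b using SpiderV.ind <;>
    simp [spiderGraph, spiderRel, legEdges, legEdge]

theorem legEdges_subset : ↑(legEdges k) ⊆ (spiderGraph k).edgeSet :=
  edgeSet_eq ▸ Set.subset_insert _ _

theorem ncard_edgeSet : (spiderGraph k).edgeSet.ncard = 2 * k + 1 := by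
  rw [edgeSet_eq, Set.ncard_insert_of_notMem (by simpa using root_z_notMem_legEdges),
    Set.ncard_coe_finset, card_legEdges]

theorem edgeSet_deleteEdges_legEdges :
    ((spiderGraph k).deleteEdges ↑(legEdges k)).edgeSet = {s(root, z)} := by
  rw [edgeSet_deleteEdges, edgeSet_eq,
    Set.insert_sdiff_of_notMem _ (by simpa using root_z_notMem_legEdges), sdiff_self,
    Set.bot_eq_empty, insert_empty_eq]

theorem domNum_deleteEdges_legEdges :
    ((spiderGraph k).deleteEdges ↑(legEdges k)).domNum = 2 * k + 1 := by
  have hadj : ((spiderGraph k).deleteEdges ↑(legEdges k)).Adj root z := by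
    rw [← mem_edgeSet, edgeSet_deleteEdges_legEdges, Set.mem_singleton_iff]
  have hle := domNum_add_one_le_card_of_adj hadj
  have hge := card_le_domNum_add_one_of_subsingleton
    (edgeSet_deleteEdges_legEdges (k := k) ▸ Set.subsingleton_singleton)
  rw [card_eq] at hle hge
  omega

theorem eq_root_of_adj_z {w : SpiderV k} (h : (spiderGraph k).Adj w z) : w = root := by
  induction w using SpiderV.ind <;> simp_all [spiderGraph, spiderRel]

theorem eq_x_of_adj_y {w : SpiderV k} {i : Fin k} (h : (spiderGraph k).Adj w (y i)) :
    w = x i := by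
  induction w using SpiderV.ind <;> simp_all [spiderGraph, spiderRel]

def leg : SpiderV k → Option (Fin k)
  | Sum.inr (Sum.inr (Sum.inl i)) => some i
  | Sum.inr (Sum.inr (Sum.inr i)) => some i
  | _ => none

theorem surjOn_leg {D : Finset (SpiderV k)} (hD : (spiderGraph k).IsDominatingSet D) :
    Set.SurjOn leg (D : Set (SpiderV k)) Set.univ := by
  rintro (_ | i) -
  · obtain h | h := hD.mem_or_mem_of_forall_adj_eq fun _ => eq_root_of_adj_z
    exacts [⟨z, h, rfl⟩, ⟨root, h, rfl⟩]
  · obtain h | h := hD.mem_or_mem_of_forall_adj_eq fun _ => eq_x_of_adj_y (i := i)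
    exacts [⟨y i, h, rfl⟩, ⟨x i, h, rfl⟩]

theorem domNum_eq : (spiderGraph k).domNum = k + 1 := by
  refine le_antisymm ?_ ?_
  · have hD : (spiderGraph k).IsDominatingSet (insert root (univ.image x)) := by
      intro v
      induction v using SpiderV.ind <;> simp [spiderGraph, spiderRel]
    calc (spiderGraph k).domNum ≤ #(insert root (univ.image x)) := domNum_le_card hD
      _ = k + 1 := by
        rw [card_insert_of_notMem (by simp), card_image_of_injective _ fun _ _ => x_inj.1,
          card_univ, Fintype.card_fin]
  · obtain ⟨D, hD, hcard⟩ := (spiderGraph k).exists_isDominatingSet_card_eq_domNum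
    calc k + 1 = #(univ : Finset (Option (Fin k))) := by simp
      _ ≤ #D := card_le_card_of_surjOn leg (by simpa using surjOn_leg hD)
      _ = _ := hcard

end spiderGraph

theorem synchBondage_spiderGraph_general (k : ℕ) :
    (∃ E' : Finset (Sym2 (SpiderV k)), ↑E' ⊆ (spiderGraph k).edgeSet ∧ E'.card = 2 * k ∧
      ((spiderGraph k).deleteEdges ↑E').domNum = (spiderGraph k).domNum + k) ∧
    (spiderGraph k).synchBondage k = 2 * k := by
  have hdom : ((spiderGraph k).deleteEdges ↑(spiderGraph.legEdges k)).domNum =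
      (spiderGraph k).domNum + k := by
    rw [spiderGraph.domNum_deleteEdges_legEdges, spiderGraph.domNum_eq]
    ring
  refine ⟨⟨_, spiderGraph.legEdges_subset, spiderGraph.card_legEdges, hdom⟩,
    SimpleGraph.synchBondage_eq _ spiderGraph.legEdges_subset hdom spiderGraph.card_legEdges
      fun E _ hE => ?_⟩
  have hE' := SimpleGraph.ncard_edgeSet_le_of_card_le_domNum_deleteEdges (E := E)
    (by rw [hE, spiderGraph.domNum_eq, SpiderV.card_eq]; omega)
  rw [spiderGraph.ncard_edgeSet] at hE'
  omega

/-- `Sb_k(S*_k) = 2k`: some set of `2k` edges of the spider graph has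
deletion increasing the domination number by exactly `k`, and no smaller set does. -/
theorem synchBondage_spiderGraph (k : ℕ) (hk : 1 ≤ k) :
    (∃ E' : Finset (Sym2 (SpiderV k)), ↑E' ⊆ (spiderGraph k).edgeSet ∧ E'.card = 2 * k ∧
      ((spiderGraph k).deleteEdges ↑E').domNum = (spiderGraph k).domNum + k) ∧
    (spiderGraph k).synchBondage k = 2 * k :=
  synchBondage_spiderGraph_general k
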